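/- Let A be a two-counter machine whose initial instruction ℓ_0 is an increment, and let H_A, S_A, x_s be the multi-mode system, safety set, and start point of the reduction. Consider any S_A-safe run ⟨x_0, (m_1, t_1), x_1, …, (m_k, t_k), x_k⟩ of H_A with x_0 = x_s and t_i > 0 for all i. Then m_1 = I; moreover, if some m_i ≠ I (i.e., the run spends positive time in a mode other than I), then, letting j be the largest index such that m_1 = … = m_j = I, one has t_1 + … + t_j = 1. -/

import Mathlib

/-! Formalization of the reduction from two-counter machines to safe reachability
in constant-rate multi-mode systems. -/

/-- The two counters. -/
inductive Cnt | c1 | c2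
deriving DecidableEq

/-- Instructions of a two-counter machine with non-halt labels `Fin n`;
a successor label `none` denotes the halt instruction `ℓ_halt`. -/
inductive Instr (n : ℕ)
  | inc (c : Cnt) (next : Option (Fin n))
  | dec (c : Cnt) (next : Option (Fin n))
  | jz (c : Cnt) (pos zero : Option (Fin n))
deriving DecidableEq

namespace Instr

variable {n : ℕ}

/-- Is this instruction a zero-test? -/
def isJz : Instr n → Bool
  | .jz _ _ _ => true
  | _ => false

/-- Is this instruction an increment? -/
def isInc : Instr n → Bool
  | .inc _ _ => true
  | _ => false

/-- The unique successor of an increment/decrement instruction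
(garbage value for zero-tests). -/
def nextOf : Instr n → Option (Fin n)
  | .inc _ j => j
  | .dec _ j => j
  | .jz _ k _ => k

/-- The positive-branch successor of a zero-test. -/
def jzPos : Instr n → Option (Fin n)
  | .jz _ k _ => k
  | i => i.nextOf

/-- The zero-branch successor of a zero-test. -/
def jzZero : Instr n → Option (Fin n)
  | .jz _ _ m => m
  | i => i.nextOf

/-- The counter an instruction operates on. -/
def cnt : Instr n → Cnt
  | .inc c _ => c
  | .dec c _ => c
  | .jz c _ _ => c

/-- `+1` for increments, `-1` for decrements, `0` for zero-tests. -/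
def dir : Instr n → ℝ
  | .inc _ _ => 1
  | .dec _ _ => -1
  | .jz _ _ _ => 0

/-- The possible successor labels of an instruction. -/
def succs : Instr n → List (Option (Fin n))
  | .inc _ j => [j]
  | .dec _ j => [j]
  | .jz _ k m => [k, m]

end Instr

/-- One step of the two-counter machine with program `P`; configurations are
`(label, c1, c2)` with label `none` meaning `ℓ_halt` (absorbing). -/
def stepTC {n : ℕ} (P : Fin n → Instr n) :
    Option (Fin n) × ℕ × ℕ → Option (Fin n) × ℕ × ℕ
  | (none, a, b) => (none, a, b)
  | (some i, a, b) =>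
    match P i with
    | .inc .c1 nx => (nx, a + 1, b)
    | .inc .c2 nx => (nx, a, b + 1)
    | .dec .c1 nx => (nx, a - 1, b)
    | .dec .c2 nx => (nx, a, b - 1)
    | .jz .c1 k m => (if 0 < a then k else m, a, b)
    | .jz .c2 k m => (if 0 < b then k else m, a, b)

/-- The machine halts: its unique run from `(ℓ_0, 0, 0)` reaches `ℓ_halt`. -/
def Halts {n : ℕ} (P : Fin (n + 1) → Instr (n + 1)) : Prop :=
  ∃ k : ℕ, ((stepTC P)^[k] (some 0, 0, 0)).1 = none

/-- The real-valued variables of the reduction MMS: `s0`, the two counters,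
`w_halt`, and the `w`, `x`, `z` families (successor `none` stands for halt). -/
inductive Var (n : ℕ)
  | s0 | c1 | c2 | whalt
  | w (i : Fin n) (j : Option (Fin n))
  | x (i : Fin n) (j : Option (Fin n))
  | z (i : Fin n)
deriving DecidableEq

/-- The variable storing a counter. -/
def cntVar {n : ℕ} : Cnt → Var n
  | .c1 => .c1
  | .c2 => .c2

/-- `w i j` is a genuine variable of the reduction: `ℓ_i` is not a zero-test and
`ℓ_j` is its successor. -/
def isWvar {n : ℕ} (P : Fin n → Instr n) (i : Fin n) (j : Option (Fin n)) : Prop :=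
  (P i).isJz = false ∧ j = (P i).nextOf

/-- `x i j` is a genuine variable of the reduction: `ℓ_j` is a possible successor
of `ℓ_i`. -/
def isXvar {n : ℕ} (P : Fin n → Instr n) (i : Fin n) (j : Option (Fin n)) : Prop :=
  j ∈ (P i).succs

/-- `z i` is a genuine variable of the reduction: `ℓ_i` is a zero-test. -/
def isZvar {n : ℕ} (P : Fin n → Instr n) (i : Fin n) : Prop :=
  (P i).isJz = true

/-- The modes of the reduction MMS `H_A`: the initial mode `I`; `M_i` for
increment/decrement `ℓ_i`; `M_i^1`, `M_i^2` for zero-test `ℓ_i`; the transfer modes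
`M_{ij}` for each possible successor `ℓ_j` of `ℓ_i`; and the three halt modes. -/
inductive Mode {n : ℕ} (P : Fin n → Instr n)
  | I
  | act (i : Fin n) (h : (P i).isJz = false)
  | jzPos (i : Fin n) (h : (P i).isJz = true)
  | jzZero (i : Fin n) (h : (P i).isJz = true)
  | trans (i : Fin n) (j : Option (Fin n)) (h : j ∈ (P i).succs)
  | halt | haltC1 | haltC2

/-- The rate vector of each mode of the reduction MMS. -/
def rate {n : ℕ} (P : Fin (n + 1) → Instr (n + 1)) : Mode P → Var (n + 1) → ℝ
  | .I => fun v =>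
      if v = .s0 then -1 else if v = .w 0 (P 0).nextOf then 1 else 0
  | .act i _ => fun v =>
      if v = .w i (P i).nextOf then -1
      else if v = .x i (P i).nextOf then 1
      else if v = cntVar (P i).cnt then (P i).dir
      else 0
  | .jzPos i _ => fun v =>
      if v = .z i then -1 else if v = .x i (P i).jzPos then 1 else 0
  | .jzZero i _ => fun v =>
      if v = .z i then -1 else if v = .x i (P i).jzZero then 1 else 0
  | .trans i j _ => fun v =>
      if v = .x i j then -1
      else
        match j with
        | none => if v = .whalt then 1 else 0
        | some j' =>
            if (P j').isJz then (if v = .z j' then 1 else 0)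
            else (if v = .w j' (P j').nextOf then 1 else 0)
  | .halt => fun v => if v = .whalt then -1 else 0
  | .haltC1 => fun v => if v = .c1 then -1 else if v = .whalt then 1 else 0
  | .haltC2 => fun v => if v = .c2 then -1 else if v = .whalt then 1 else 0

/-- The safety set `S_A` of the reduction: conjunction of conditions
(φa)–(φg). -/
def SafeSet {n : ℕ} (P : Fin n → Instr n) : Set (Var n → ℝ) :=
  { p |
    -- (φa)
    (0 ≤ p .s0 ∧ p .s0 ≤ 1) ∧ 0 ≤ p .whalt ∧ 0 ≤ p .c1 ∧ 0 ≤ p .c2 ∧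
    (∀ i j, isWvar P i j → 0 ≤ p (.w i j) ∧ p (.w i j) ≤ 1) ∧
    (∀ i j, isXvar P i j → 0 ≤ p (.x i j) ∧ p (.x i j) ≤ 1) ∧
    (∀ i, isZvar P i → 0 ≤ p (.z i) ∧ p (.z i) ≤ 1) ∧
    -- (φb)
    (∀ i j, isXvar P i j → 0 < p (.x i j) →
      ∀ g f, isXvar P g f → (g ≠ i ∨ f ≠ j) → p (.x g f) = 0) ∧
    -- (φc)
    (∀ i j, isWvar P i j → 0 < p (.w i j) →
      (∀ g f, isWvar P g f → (g ≠ i ∨ f ≠ j) → p (.w g f) = 0) ∧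
        (∀ g, isZvar P g → p (.z g) = 0)) ∧
    -- (φd)
    (∀ i, isZvar P i → 0 < p (.z i) →
      (∀ g, isZvar P g → g ≠ i → p (.z g) = 0) ∧
        (∀ g f, isWvar P g f → p (.w g f) = 0)) ∧
    -- (φe)
    (0 < p .s0 → ∀ i j, isXvar P i j → p (.x i j) = 0) ∧
    -- (φf)
    (0 < p .whalt →
      p .s0 = 0 ∧ (∀ i j, isWvar P i j → p (.w i j) = 0) ∧
      (∀ i, isZvar P i → p (.z i) = 0) ∧
      (∀ i j, isXvar P i j → j ≠ none → p (.x i j) = 0)) ∧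
    -- (φg)
    (∀ i, isXvar P i none → 0 < p (.x i none) → p (.x i none) + p .whalt = 1) }

/-- The start point `x_s`: `s_0 = 1`, all other variables `0`. -/
def startPt {n : ℕ} : Var n → ℝ := fun v => if v = .s0 then 1 else 0

/-- The target point `x_t`: `w_halt = 1`, all other variables `0`. -/
def targetPt {n : ℕ} : Var n → ℝ := fun v => if v = .whalt then 1 else 0

/-- The terminal state of the run of a schedule (a list of timed actions) from a state. -/
def runEnd {M V : Type*} [AddCommGroup V] [Module ℝ V] (R : M → V) : V → List (M × ℝ) → V
  | x, [] => x
  | x, (m, t) :: σ => runEnd R (x + t • R m) σ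

/-- A schedule is `S`-safe from `x` if every point visited during its run lies in `S`. -/
def SafeSched {M V : Type*} [AddCommGroup V] [Module ℝ V] (R : M → V) (S : Set V) :
    V → List (M × ℝ) → Prop
  | _, [] => True
  | x, (m, t) :: σ =>
      (∀ τ ∈ Set.Icc (0 : ℝ) t, x + τ • R m ∈ S) ∧ SafeSched R S (x + t • R m) σ

/-! Every mode drains some variable that the safety set keeps nonnegative; at the start point
only `s0` is positive, so the run must begin with `I`. While only `I` has been used, the state is
`startPt + T • rate I`, on which only `s0 = 1 - T` and `w 0 (P 0).nextOf = T` are positive.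
If `T < 1` the next mode must therefore drain `w 0 (P 0).nextOf`, i.e. be the mode of `ℓ_0`;
but that mode raises `x 0 (P 0).nextOf` while `s0` is still positive, violating (φe). Safety
of `s0` gives `T ≤ 1`. -/

theorem eq_add_sum_smul_of_forall_eq_add_smul {V : Type*} [AddCommGroup V] [Module ℝ V]
    (x : ℕ → V) (t : ℕ → ℝ) (r : V) (j : ℕ)
    (h : ∀ i, 1 ≤ i → i ≤ j → x i = x (i - 1) + t i • r) :
    x j = x 0 + (∑ i ∈ Finset.Icc 1 j, t i) • r := by
  induction j with
  | zero => simp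
  | succ j ih =>
    rw [h (j + 1) (Nat.le_add_left 1 j) le_rfl, Nat.add_sub_cancel,
      ih fun i hi hij => h i hi (hij.trans j.le_succ),
      Finset.sum_Icc_succ_top (Nat.le_add_left 1 j), add_smul, add_assoc]

theorem isXvar_nextOf {n : ℕ} (P : Fin n → Instr n) (i : Fin n) : isXvar P i (P i).nextOf := by
  cases h : P i <;> simp [isXvar, h, Instr.succs, Instr.nextOf]

namespace Mode

variable {n : ℕ} {P : Fin (n + 1) → Instr (n + 1)}

def drained : Mode P → Var (n + 1)
  | .I => .s0
  | .act i _ => .w i (P i).nextOf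
  | .jzPos i _ => .z i
  | .jzZero i _ => .z i
  | .trans i j _ => .x i j
  | .halt => .whalt
  | .haltC1 => .c1
  | .haltC2 => .c2

theorem rate_drained (μ : Mode P) : rate P μ μ.drained = -1 := by
  cases μ <;> simp [rate, drained]

theorem nonneg_drained_of_mem_safeSet {p : Var (n + 1) → ℝ} (hp : p ∈ SafeSet P)
    (μ : Mode P) : 0 ≤ p μ.drained := by
  obtain ⟨⟨hs0, -⟩, hwhalt, hc1, hc2, hW, hX, hZ, -⟩ := hp
  cases μ with
  | I => exact hs0
  | act i h => exact (hW i _ ⟨h, rfl⟩).1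
  | jzPos i h => exact (hZ i h).1
  | jzZero i h => exact (hZ i h).1
  | trans i j h => exact (hX i j h).1
  | halt => exact hwhalt
  | haltC1 => exact hc1
  | haltC2 => exact hc2

theorem drained_pos_of_add_smul_mem_safeSet {p : Var (n + 1) → ℝ} {μ : Mode P} {τ : ℝ}
    (hτ : 0 < τ) (hp : p + τ • rate P μ ∈ SafeSet P) : 0 < p μ.drained := by
  have h := nonneg_drained_of_mem_safeSet hp μ
  simp only [Pi.add_apply, Pi.smul_apply, smul_eq_mul, rate_drained] at h
  linarith

theorem eq_I_of_startPt_drained_pos {μ : Mode P}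
    (h : 0 < (startPt : Var (n + 1) → ℝ) μ.drained) : μ = .I := by
  cases μ <;> simp_all [startPt, drained]

theorem eq_I_or_act_zero_of_initialSegment_drained_pos {μ : Mode P} {T : ℝ}
    (h : 0 < ((startPt : Var (n + 1) → ℝ) + T • rate P .I) μ.drained) :
    μ = .I ∨ ∃ h0, μ = .act 0 h0 := by
  cases μ with
  | act i h0 =>
    by_cases hi : i = 0
    · exact .inr ⟨hi ▸ h0, by subst hi; rfl⟩
    · simp [startPt, rate, drained, hi] at h
  | _ => simp_all [startPt, rate, drained]

theorem add_smul_act_zero_not_mem_safeSet (h0 : (P 0).isJz = false) {T τ : ℝ}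
    (hT : T < 1) (hτ : 0 < τ) :
    startPt + T • rate P .I + τ • rate P (.act 0 h0) ∉ SafeSet P := by
  intro hp
  have hs0 :
      0 < (startPt + T • rate P .I + τ • rate P (.act 0 h0) : Var (n + 1) → ℝ) .s0 := by
    cases hc : (P 0).cnt <;> simp [startPt, rate, cntVar, hc] <;> linarith
  obtain ⟨-, -, -, -, -, -, -, -, -, -, hφe, -⟩ := hp
  have hx := hφe hs0 0 (P 0).nextOf (isXvar_nextOf P 0)
  simp [startPt, rate] at hx
  linarith

end Mode

theorem stmt9_general {n : ℕ} (P : Fin (n + 1) → Instr (n + 1))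
    (k : ℕ) (hk : 0 < k)
    (m : ℕ → Mode P) (t : ℕ → ℝ) (x : ℕ → Var (n + 1) → ℝ)
    (hx0 : x 0 = startPt)
    (ht : ∀ i, 1 ≤ i → i ≤ k → 0 < t i)
    (hstep : ∀ i, 1 ≤ i → i ≤ k → x i = x (i - 1) + t i • rate P (m i))
    (hsafe : ∀ i, 1 ≤ i → i ≤ k → ∀ τ ∈ Set.Icc (0 : ℝ) (t i),
      x (i - 1) + τ • rate P (m i) ∈ SafeSet P) :
    m 1 = Mode.I ∧
      ∀ j, 1 ≤ j → j < k → (∀ i, 1 ≤ i → i ≤ j → m i = Mode.I) →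
        m (j + 1) ≠ Mode.I → (∑ i ∈ Finset.Icc 1 j, t i) = 1 := by
  have hsafe_end : ∀ i, 1 ≤ i → i ≤ k → x (i - 1) + t i • rate P (m i) ∈ SafeSet P :=
    fun i hi hik => hsafe i hi hik (t i) ⟨(ht i hi hik).le, le_rfl⟩
  refine ⟨Mode.eq_I_of_startPt_drained_pos ?_, fun j hj hjk hI hne => ?_⟩
  · rw [← hx0]
    exact Mode.drained_pos_of_add_smul_mem_safeSet (ht 1 le_rfl hk) (hsafe_end 1 le_rfl hk)
  have hj1 : 1 ≤ j + 1 := Nat.le_add_left 1 j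
  have hxj : x j = startPt + (∑ i ∈ Finset.Icc 1 j, t i) • rate P .I := by
    rw [← hx0]
    refine eq_add_sum_smul_of_forall_eq_add_smul x t _ j fun i hi hij => ?_
    rw [hstep i hi (hij.trans hjk.le), hI i hi hij]
  have hxj_safe := hsafe (j + 1) hj1 hjk 0 ⟨le_rfl, (ht _ hj1 hjk).le⟩
  rw [zero_smul, add_zero, Nat.add_sub_cancel, hxj] at hxj_safe
  have hT_le : ∑ i ∈ Finset.Icc 1 j, t i ≤ 1 := by
    have := Mode.nonneg_drained_of_mem_safeSet hxj_safe .I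
    simp [Mode.drained, startPt, rate] at this
    linarith
  refine hT_le.eq_or_lt.resolve_right fun hT_lt => ?_
  have hnext := hsafe_end (j + 1) hj1 hjk
  rw [Nat.add_sub_cancel, hxj] at hnext
  rcases Mode.eq_I_or_act_zero_of_initialSegment_drained_pos
    (Mode.drained_pos_of_add_smul_mem_safeSet (ht _ hj1 hjk) hnext) with hI' | ⟨h0, h0'⟩
  · exact hne hI'
  · rw [h0'] at hnext
    exact Mode.add_smul_act_zero_not_mem_safeSet h0 hT_lt (ht _ hj1 hjk) hnext

/-- Any `S_A`-safe run of the reduction MMS from the start point `x_s` with positive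
dwell times must begin in the initial mode `I`; moreover, if the run eventually uses a
mode other than `I`, then the total time spent in the initial block of `I`-modes
(the maximal prefix `m_1 = … = m_j = I`) is exactly `1`. -/
theorem stmt9 {n : ℕ} (P : Fin (n + 1) → Instr (n + 1))
    (h0 : (P 0).isInc = true)
    (k : ℕ) (hk : 0 < k)
    (m : ℕ → Mode P) (t : ℕ → ℝ) (x : ℕ → Var (n + 1) → ℝ)
    (hx0 : x 0 = startPt)
    (ht : ∀ i, 1 ≤ i → i ≤ k → 0 < t i)
    (hstep : ∀ i, 1 ≤ i → i ≤ k → x i = x (i - 1) + t i • rate P (m i))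
    (hsafe : ∀ i, 1 ≤ i → i ≤ k → ∀ τ ∈ Set.Icc (0 : ℝ) (t i),
      x (i - 1) + τ • rate P (m i) ∈ SafeSet P) :
    m 1 = Mode.I ∧
      ∀ j, 1 ≤ j → j < k → (∀ i, 1 ≤ i → i ≤ j → m i = Mode.I) →
        m (j + 1) ≠ Mode.I → (∑ i ∈ Finset.Icc 1 j, t i) = 1 :=
  stmt9_general P k hk m t x hx0 ht hstep hsafe
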